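/- arXiv:1209.4991 — 7 statements merged into one kernel-verified Lean document; each statement's English description precedes it below -/
import Mathlib

section
/- Let P be a permutation of a finite type whose cycle decomposition consists of m ≥ 1 nontrivial disjoint cycles with n > 2 total entries (support cardinality n), exactly r of which are transpositions. Then there exists a list of pairwise distinct transpositions, none of which belongs to the set of cycle factors of P, of length n − m + r + ε_r whose product equals P, where ε_r = 0 if r is even and ε_r = 1 if r is odd. -/
/-!
A cycle of length `k ≥ 3` is a product of `k - 1` transpositions taken from its support, none of
which is the cycle itself. Transposition factors cannot be kept, but two disjoint ones can be
traded for four new transpositions, `(a b)(x y) = (a x)(b y)(a y)(b x)`, so pairing them up gives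
`n - m + r` transpositions when `r` is even. When `r` is odd, one factor `(a b)` is left over;
the same identity absorbs it into the first transposition `(x y)` of the factorization of a long
cycle, or of the four-term factorization of two further transposition factors, at the cost of one
extra transposition. As `n > 2`, one of the two is available.
-/

open Finset

namespace Equiv.Perm

section Swaps

variable {α : Type*} [DecidableEq α]

theorem swap_ne_swap_of_ne {a b c d : α} (hab : a ≠ b) (hac : a ≠ c) (had : a ≠ d) :
    swap a b ≠ swap c d := fun h => by
  have := DFunLike.congr_fun h a
  rw [swap_apply_left, swap_apply_of_ne_of_ne hac had] at this
  exact hab this.symm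

theorem swap_mul_swap_eq_prod {a b x y : α} (hab : a ≠ b) (hxy : x ≠ y) (hax : a ≠ x)
    (hay : a ≠ y) (hbx : b ≠ x) (hby : b ≠ y) :
    swap a b * swap x y = [swap a x, swap b y, swap a y, swap b x].prod := by
  ext z
  simp only [List.prod_cons, List.prod_nil, mul_one, mul_apply]
  rcases eq_or_ne z a with rfl | hza; · simp [swap_apply_of_ne_of_ne, *, Ne.symm]
  rcases eq_or_ne z b with rfl | hzb; · simp [swap_apply_of_ne_of_ne, *, Ne.symm]
  rcases eq_or_ne z x with rfl | hzx; · simp [swap_apply_of_ne_of_ne, *, Ne.symm]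
  rcases eq_or_ne z y with rfl | hzy; · simp [swap_apply_of_ne_of_ne, *, Ne.symm]
  simp [swap_apply_of_ne_of_ne, *]

theorem nodup_swap_quadruple {a b x y : α} (hab : a ≠ b) (hxy : x ≠ y) (hax : a ≠ x)
    (hay : a ≠ y) :
    [swap a x, swap b y, swap a y, swap b x].Nodup := by
  simp only [List.nodup_cons, List.mem_cons, List.not_mem_nil, or_false, not_or,
    List.nodup_nil, and_true, not_false_eq_true]
  exact ⟨⟨swap_ne_swap_of_ne hax hab hay, (swap_injective_of_left a).ne hxy,
    (swap_injective_of_right x).ne hab⟩, ⟨(swap_injective_of_right y).ne hab.symm,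
    (swap_injective_of_left b).ne hxy.symm⟩, swap_ne_swap_of_ne hay hab hax⟩

theorem mem_swap_quadruple {a b x y : α} {τ : Perm α}
    (h : τ ∈ [swap a x, swap b y, swap a y, swap b x]) :
    ∃ u ∈ ({a, b} : Finset α), ∃ v ∈ ({x, y} : Finset α), τ = swap u v := by
  simp only [List.mem_cons, List.not_mem_nil, or_false] at h
  rcases h with rfl | rfl | rfl | rfl <;> simp

theorem IsSwap.ne_one {σ : Perm α} (h : σ.IsSwap) : σ ≠ 1 :=
  h.isCycle.ne_one

end Swaps

variable {α : Type*} [DecidableEq α] [Fintype α]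

theorem swap_notMem_cycleFactorsFinset {σ : Perm α} {u v : α} (h : σ u ≠ v) :
    swap u v ∉ σ.cycleFactorsFinset := by
  intro hmem
  obtain ⟨hcyc, hagree⟩ := mem_cycleFactorsFinset_iff.1 hmem
  have huv : u ≠ v := by
    rintro rfl
    exact hcyc.ne_one (swap_self u)
  exact h (by rw [← hagree u (by simp [support_swap huv]), swap_apply_left])

theorem Disjoint.eq_one_of_support_subset {σ τ ρ : Perm α} (hd : Disjoint σ τ)
    (hσ : ρ.support ⊆ σ.support) (hτ : ρ.support ⊆ τ.support) : ρ = 1 :=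
  disjoint_refl_iff.1 (hd.mono hσ hτ)

structure IsSwapFactorization (σ : Perm α) (l : List (Perm α)) : Prop where
  isSwap : ∀ τ ∈ l, τ.IsSwap
  nodup : l.Nodup
  support_subset : ∀ τ ∈ l, τ.support ⊆ σ.support
  prod_eq : l.prod = σ

structure IsFreshSwapFactorization (σ : Perm α) (l : List (Perm α)) : Prop
    extends IsSwapFactorization σ l where
  notMem_cycleFactorsFinset : ∀ τ ∈ l, τ ∉ σ.cycleFactorsFinset

namespace IsSwapFactorization

variable {σ τ : Perm α} {l l₁ l₂ : List (Perm α)}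

theorem singleton (h : σ.IsSwap) : IsSwapFactorization σ [σ] where
  isSwap := by simpa using h
  nodup := List.nodup_singleton σ
  support_subset := by simp
  prod_eq := List.prod_singleton

theorem notMem_cycleFactorsFinset_of_disjoint (h : IsSwapFactorization σ l) (hd : Disjoint σ τ) :
    ∀ ρ ∈ l, ρ ∉ τ.cycleFactorsFinset := fun ρ hρ hmem =>
  (h.isSwap ρ hρ).ne_one <|
    hd.eq_one_of_support_subset (h.support_subset ρ hρ) (mem_cycleFactorsFinset_support_le hmem)

theorem mul (hd : Disjoint σ τ) (h₁ : IsSwapFactorization σ l₁)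
    (h₂ : IsSwapFactorization τ l₂) : IsSwapFactorization (σ * τ) (l₁ ++ l₂) where
  isSwap ρ hρ := (List.mem_append.1 hρ).elim (h₁.isSwap ρ) (h₂.isSwap ρ)
  nodup := List.nodup_append.2 ⟨h₁.nodup, h₂.nodup, fun ρ hρ ρ' hρ' hρρ' =>
    (h₁.isSwap ρ hρ).ne_one <| hd.eq_one_of_support_subset (h₁.support_subset ρ hρ)
      (hρρ' ▸ h₂.support_subset ρ' hρ')⟩
  support_subset ρ hρ := by
    rw [hd.support_mul]
    exact (List.mem_append.1 hρ).elim (fun h => (h₁.support_subset ρ h).trans subset_union_left)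
      (fun h => (h₂.support_subset ρ h).trans subset_union_right)
  prod_eq := by rw [List.prod_append, h₁.prod_eq, h₂.prod_eq]

end IsSwapFactorization

theorem IsFreshSwapFactorization.mul {σ τ : Perm α} {l₁ l₂ : List (Perm α)} (hd : Disjoint σ τ)
    (h₁ : IsFreshSwapFactorization σ l₁) (h₂ : IsFreshSwapFactorization τ l₂) :
    IsFreshSwapFactorization (σ * τ) (l₁ ++ l₂) where
  toIsSwapFactorization := h₁.toIsSwapFactorization.mul hd h₂.toIsSwapFactorization
  notMem_cycleFactorsFinset ρ hρ := by
    rw [hd.cycleFactorsFinset_mul_eq_union, mem_union, not_or]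
    rcases List.mem_append.1 hρ with h | h
    · exact ⟨h₁.notMem_cycleFactorsFinset ρ h,
        h₁.notMem_cycleFactorsFinset_of_disjoint hd ρ h⟩
    · exact ⟨h₂.notMem_cycleFactorsFinset_of_disjoint hd.symm ρ h,
        h₂.notMem_cycleFactorsFinset ρ h⟩

theorem IsCycle.exists_isSwapFactorization {c : Perm α} (hc : c.IsCycle) :
    ∃ l, IsSwapFactorization c l ∧ l.length + 1 = #c.support := by
  induction hk : #c.support generalizing c with
  | zero => exact absurd hk (by have := hc.two_le_card_support; omega)
  | succ k ih =>
    obtain ⟨x, hx, -⟩ := id hc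
    by_cases hcx : c (c x) = x
    · have hswap : c.IsSwap := ⟨x, c x, (Ne.symm hx), hc.eq_swap_of_apply_apply_eq_self hx hcx⟩
      refine ⟨[c], .singleton hswap, ?_⟩
      rw [← hk, card_support_eq_two.2 hswap]; rfl
    have hxc : x ∈ c.support := mem_support.2 hx
    have hsupp := support_swap_mul_eq c x hcx
    obtain ⟨l, hl, hlen⟩ := ih (hc.swap_mul hx hcx)
      (by rw [hsupp, card_sdiff_of_subset (by simpa using hxc)]; simp [hk])
    have hsub : (swap x (c x)).support ⊆ c.support := by
      rw [support_swap (Ne.symm hx), insert_subset_iff, singleton_subset_iff]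
      exact ⟨hxc, apply_mem_support.2 hxc⟩
    refine ⟨swap x (c x) :: l, ⟨?_, ?_, ?_, ?_⟩, ?_⟩
    · simpa using ⟨⟨x, c x, Ne.symm hx, rfl⟩, hl.isSwap⟩
    · refine List.nodup_cons.2 ⟨fun hmem => ?_, hl.nodup⟩
      have := hl.support_subset _ hmem (by simp [support_swap (Ne.symm hx)] : x ∈ _)
      simp [hsupp] at this
    · simp only [List.mem_cons, forall_eq_or_imp]
      exact ⟨hsub, fun τ hτ => (hl.support_subset τ hτ).trans (hsupp ▸ sdiff_subset)⟩
    · rw [List.prod_cons, hl.prod_eq, swap_mul_self_mul]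
    · simp only [List.length_cons]; omega

theorem Disjoint.swap_notMem_cycleFactorsFinset_mul {t ρ : Perm α} (hd : Disjoint t ρ) {u v : α}
    (hu : u ∈ t.support) (hv : v ∈ ρ.support) : swap u v ∉ (t * ρ).cycleFactorsFinset := by
  refine swap_notMem_cycleFactorsFinset
    (ne_of_mem_of_not_mem ?_ (disjoint_right.1 hd.disjoint_support hv))
  rw [mul_apply, notMem_support.1 (disjoint_left.1 hd.disjoint_support hu)]
  exact apply_mem_support.2 hu

theorem IsSwapFactorization.exists_isFreshSwapFactorization_swap_mul {t ρ s : Perm α}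
    {l : List (Perm α)} (ht : t.IsSwap) (hd : Disjoint t ρ) (hρ : IsSwapFactorization ρ (s :: l))
    (hl : ∀ τ ∈ l, τ ∉ ρ.cycleFactorsFinset) :
    ∃ l', IsFreshSwapFactorization (t * ρ) l' ∧ l'.length = l.length + 4 := by
  have hne : ∀ u ∈ t.support, ∀ v ∈ ρ.support, u ≠ v := fun u hu v hv =>
    ne_of_mem_of_not_mem hu (disjoint_right.1 hd.disjoint_support hv)
  obtain ⟨a, b, hab, rfl⟩ := ht
  obtain ⟨x, y, hxy, rfl⟩ := hρ.isSwap s List.mem_cons_self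
  have hxyρ : {x, y} ⊆ ρ.support := support_swap hxy ▸ hρ.support_subset _ List.mem_cons_self
  set q := [swap a x, swap b y, swap a y, swap b x]
  have hq : ∀ τ ∈ q, ∃ u ∈ (swap a b).support, ∃ v ∈ ρ.support, τ = swap u v := fun τ hτ => by
    obtain ⟨u, hu, v, hv, rfl⟩ := mem_swap_quadruple hτ
    exact ⟨u, support_swap hab ▸ hu, v, hxyρ hv, rfl⟩
  have hab_xy (u) (hu : u ∈ ({a, b} : Finset α)) (v) (hv : v ∈ ({x, y} : Finset α)) : u ≠ v :=
    hne u (support_swap hab ▸ hu) v (hxyρ hv)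
  have hsupp : ∀ τ ∈ l, τ.support ⊆ ρ.support := fun τ hτ =>
    hρ.support_subset τ (List.mem_cons_of_mem _ hτ)
  refine ⟨q ++ l, ⟨⟨fun τ hτ => ?_, ?_, fun τ hτ => ?_, ?_⟩, fun τ hτ => ?_⟩, by simp [q]⟩
  · rcases List.mem_append.1 hτ with h | h
    · obtain ⟨u, hu, v, hv, rfl⟩ := hq τ h
      exact ⟨u, v, hne u hu v hv, rfl⟩
    · exact hρ.isSwap τ (List.mem_cons_of_mem _ h)
  · refine List.nodup_append.2 ⟨nodup_swap_quadruple hab hxy (hab_xy a (by simp) x (by simp))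
      (hab_xy a (by simp) y (by simp)), hρ.nodup.of_cons, fun τ hτ τ' hτ' he => ?_⟩
    obtain ⟨u, hu, v, hv, rfl⟩ := hq τ hτ
    exact hne u hu u (hsupp τ' hτ' (he ▸ by simp [support_swap (hne u hu v hv)])) rfl
  · rw [hd.support_mul]
    rcases List.mem_append.1 hτ with h | h
    · obtain ⟨u, hu, v, hv, rfl⟩ := hq τ h
      rw [support_swap (hne u hu v hv), insert_subset_iff, singleton_subset_iff]
      exact ⟨mem_union_left _ hu, mem_union_right _ hv⟩
    · exact (hsupp τ h).trans subset_union_right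
  · rw [List.prod_append, ← swap_mul_swap_eq_prod hab hxy (hab_xy a (by simp) x (by simp))
      (hab_xy a (by simp) y (by simp)) (hab_xy b (by simp) x (by simp))
      (hab_xy b (by simp) y (by simp)), mul_assoc, ← List.prod_cons, hρ.prod_eq]
  · rcases List.mem_append.1 hτ with h | h
    · obtain ⟨u, hu, v, hv, rfl⟩ := hq τ h
      exact hd.swap_notMem_cycleFactorsFinset_mul hu hv
    · rw [hd.cycleFactorsFinset_mul_eq_union, mem_union, not_or]
      exact ⟨hρ.notMem_cycleFactorsFinset_of_disjoint hd.symm τ (List.mem_cons_of_mem _ h),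
        hl τ h⟩

theorem card_cycleType_eq_card_cycleFactorsFinset (σ : Perm α) :
    Multiset.card σ.cycleType = #σ.cycleFactorsFinset := by
  simp [cycleType_def]

theorem count_two_cycleType [DecidablePred (IsSwap : Perm α → Prop)] (σ : Perm α) :
    σ.cycleType.count 2 = #(σ.cycleFactorsFinset.filter IsSwap) := by
  rw [cycleType_def, Multiset.count_map, card_def, filter_val]
  exact congrArg _ <| Multiset.filter_congr fun c _ => by
    rw [eq_comm, Function.comp_apply, card_support_eq_two]

theorem count_two_cycleType_eq_card {σ : Perm α} (h : ∀ c ∈ σ.cycleFactorsFinset, c.IsSwap) :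
    σ.cycleType.count 2 = #σ.cycleFactorsFinset := by
  classical
  rw [count_two_cycleType, filter_true_of_mem h]

theorem exists_isSwap_mem_cycleFactorsFinset {σ : Perm α} (h : 0 < σ.cycleType.count 2) :
    ∃ t ∈ σ.cycleFactorsFinset, t.IsSwap := by
  classical
  rw [count_two_cycleType] at h
  obtain ⟨t, ht⟩ := card_pos.1 h
  exact ⟨t, (mem_filter.1 ht).1, (mem_filter.1 ht).2⟩

theorem isSwap_of_card_cycleFactorsFinset_eq_one {σ : Perm α} (h : #σ.cycleFactorsFinset = 1)
    (hswap : ∀ c ∈ σ.cycleFactorsFinset, c.IsSwap) : σ.IsSwap := by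
  have hcyc : σ.IsCycle := by
    rwa [← card_cycleType_eq_one, card_cycleType_eq_card_cycleFactorsFinset]
  exact hswap σ (by simp [hcyc.cycleFactorsFinset_eq_singleton])

theorem card_cycleType_le_sum (σ : Perm α) : Multiset.card σ.cycleType ≤ σ.cycleType.sum := by
  simpa using Multiset.card_nsmul_le_sum fun _ hx => one_le_two.trans (two_le_of_mem_cycleType hx)

theorem cycleFactorsFinset_subset_of_mem {σ c : Perm α} (hc : c ∈ σ.cycleFactorsFinset) :
    c.cycleFactorsFinset ⊆ σ.cycleFactorsFinset := by
  rw [(mem_cycleFactorsFinset_iff.1 hc).1.cycleFactorsFinset_eq_singleton, singleton_subset_iff]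
  exact hc

theorem Disjoint.cycleFactorsFinset_mul_subset {σ f g : Perm α} (hd : Disjoint f g)
    (hf : f.cycleFactorsFinset ⊆ σ.cycleFactorsFinset)
    (hg : g.cycleFactorsFinset ⊆ σ.cycleFactorsFinset) :
    (f * g).cycleFactorsFinset ⊆ σ.cycleFactorsFinset :=
  hd.cycleFactorsFinset_mul_eq_union ▸ union_subset hf hg

theorem disjoint_mul_inv_of_cycleFactorsFinset_subset {σ β : Perm α}
    (h : β.cycleFactorsFinset ⊆ σ.cycleFactorsFinset) : Disjoint (σ * β⁻¹) β := by
  have hagree : ∀ y ∈ β.support, σ y = β y := fun y hy => by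
    obtain ⟨c, hc, hyc⟩ := mem_support_iff_mem_support_of_mem_cycleFactorsFinset.1 hy
    rw [← (mem_cycleFactorsFinset_iff.1 (h hc)).2 y hyc, (mem_cycleFactorsFinset_iff.1 hc).2 y hyc]
  intro x
  by_cases hx : β x = x
  · exact Or.inr hx
  · refine Or.inl ?_
    rw [mul_apply, hagree _ (by rwa [← support_inv, apply_mem_support, support_inv, mem_support])]
    simp

theorem cycleType_mul_inv_add {σ β : Perm α} (h : β.cycleFactorsFinset ⊆ σ.cycleFactorsFinset) :
    (σ * β⁻¹).cycleType + β.cycleType = σ.cycleType := by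
  rw [← (disjoint_mul_inv_of_cycleFactorsFinset_subset h).cycleType_mul, inv_mul_cancel_right]

-- Length `n - m + r + e`, where `n`, `m`, `r` are the sum, the size and the number of `2`s of the
-- cycle type.
def HasFreshSwapFactorization (σ : Perm α) (e : ℕ) : Prop :=
  ∃ l, IsFreshSwapFactorization σ l ∧
    l.length + Multiset.card σ.cycleType = σ.cycleType.sum + σ.cycleType.count 2 + e

theorem HasFreshSwapFactorization.mul {σ τ : Perm α} {e₁ e₂ : ℕ} (hd : Disjoint σ τ)
    (h₁ : HasFreshSwapFactorization σ e₁) (h₂ : HasFreshSwapFactorization τ e₂) :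
    HasFreshSwapFactorization (σ * τ) (e₁ + e₂) := by
  obtain ⟨l₁, hl₁, hlen₁⟩ := h₁
  obtain ⟨l₂, hl₂, hlen₂⟩ := h₂
  refine ⟨l₁ ++ l₂, hl₁.mul hd hl₂, ?_⟩
  simp only [hd.cycleType_mul, List.length_append, Multiset.card_add, Multiset.sum_add,
    Multiset.count_add]
  omega

theorem HasFreshSwapFactorization.of_mul_inv {σ β : Perm α} {e₁ e₂ : ℕ}
    (h : β.cycleFactorsFinset ⊆ σ.cycleFactorsFinset) (h₁ : HasFreshSwapFactorization (σ * β⁻¹) e₁)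
    (h₂ : HasFreshSwapFactorization β e₂) : HasFreshSwapFactorization σ (e₁ + e₂) := by
  simpa using h₁.mul (disjoint_mul_inv_of_cycleFactorsFinset_subset h) h₂

theorem IsCycle.hasFreshSwapFactorization {c : Perm α} (hc : c.IsCycle) (hc' : ¬c.IsSwap) :
    HasFreshSwapFactorization c 0 := by
  obtain ⟨l, hl, hlen⟩ := hc.exists_isSwapFactorization
  refine ⟨l, ⟨hl, fun τ hτ hmem => hc' ?_⟩, ?_⟩
  · rw [hc.cycleFactorsFinset_eq_singleton, mem_singleton] at hmem
    exact hmem ▸ hl.isSwap τ hτ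
  · simp [hc.cycleType, Ne.symm (mt card_support_eq_two.1 hc'), hlen]

theorem hasFreshSwapFactorization_swap_mul_swap {t₁ t₂ : Perm α} (h₁ : t₁.IsSwap)
    (h₂ : t₂.IsSwap) (hd : Disjoint t₁ t₂) : HasFreshSwapFactorization (t₁ * t₂) 0 := by
  obtain ⟨l, hl, hlen⟩ :=
    (IsSwapFactorization.singleton h₂).exists_isFreshSwapFactorization_swap_mul h₁ hd (by simp)
  refine ⟨l, hl, ?_⟩
  simp [hd.cycleType_mul, isSwap_iff_cycleType.1 h₁, isSwap_iff_cycleType.1 h₂, hlen]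

theorem hasFreshSwapFactorization_swap_mul_cycle {t c : Perm α} (ht : t.IsSwap) (hc : c.IsCycle)
    (hc' : ¬c.IsSwap) (hd : Disjoint t c) : HasFreshSwapFactorization (t * c) 1 := by
  obtain ⟨_ | ⟨s, l⟩, hl, hlen⟩ := hc.exists_isSwapFactorization
  · have := hc.two_le_card_support
    simp at hlen
    omega
  have hfresh : ∀ τ ∈ l, τ ∉ c.cycleFactorsFinset := fun τ hτ hmem => by
    rw [hc.cycleFactorsFinset_eq_singleton, mem_singleton] at hmem
    exact hc' (hmem ▸ hl.isSwap τ (List.mem_cons_of_mem _ hτ))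
  obtain ⟨l', hl', hlen'⟩ := hl.exists_isFreshSwapFactorization_swap_mul ht hd hfresh
  refine ⟨l', hl', ?_⟩
  simp only [List.length_cons] at hlen
  simp [hd.cycleType_mul, isSwap_iff_cycleType.1 ht, hc.cycleType,
    Ne.symm (mt card_support_eq_two.1 hc'), hlen']
  omega

theorem hasFreshSwapFactorization_swap_mul_swap_mul_swap {t₁ t₂ t₃ : Perm α} (h₁ : t₁.IsSwap)
    (h₂ : t₂.IsSwap) (h₃ : t₃.IsSwap) (h₁₂ : Disjoint t₁ t₂) (h₁₃ : Disjoint t₁ t₃)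
    (h₂₃ : Disjoint t₂ t₃) : HasFreshSwapFactorization (t₁ * (t₂ * t₃)) 1 := by
  obtain ⟨_ | ⟨s, l⟩, hl, hlen⟩ := hasFreshSwapFactorization_swap_mul_swap h₂ h₃ h₂₃
  · simp [h₂₃.cycleType_mul, isSwap_iff_cycleType.1 h₂, isSwap_iff_cycleType.1 h₃] at hlen
  obtain ⟨l', hl', hlen'⟩ := hl.toIsSwapFactorization.exists_isFreshSwapFactorization_swap_mul h₁
    (h₁₂.mul_right h₁₃) fun τ hτ => hl.notMem_cycleFactorsFinset τ (List.mem_cons_of_mem _ hτ)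
  refine ⟨l', hl', ?_⟩
  simp [h₂₃.cycleType_mul, isSwap_iff_cycleType.1 h₂, isSwap_iff_cycleType.1 h₃] at hlen
  simp [(h₁₂.mul_right h₁₃).cycleType_mul, h₂₃.cycleType_mul, isSwap_iff_cycleType.1 h₁,
    isSwap_iff_cycleType.1 h₂, isSwap_iff_cycleType.1 h₃, hlen', hlen]

theorem hasFreshSwapFactorization_of_even (σ : Perm α) (h : Even (σ.cycleType.count 2)) :
    HasFreshSwapFactorization σ 0 := by
  induction hk : Multiset.card σ.cycleType using Nat.strong_induction_on generalizing σ with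
  | _ k ih =>
  have peel (β : Perm α) (hβσ : β.cycleFactorsFinset ⊆ σ.cycleFactorsFinset)
      (hβ1 : 0 < Multiset.card β.cycleType) (hβe : Even (β.cycleType.count 2))
      (hβ : HasFreshSwapFactorization β 0) : HasFreshSwapFactorization σ 0 := by
    have hct := cycleType_mul_inv_add hβσ
    refine HasFreshSwapFactorization.of_mul_inv hβσ (ih _ ?_ _ ?_ rfl) hβ
    · rw [← hk, ← hct, Multiset.card_add]
      omega
    · rw [← hct, Multiset.count_add] at h
      exact (Nat.even_add.1 h).2 hβe
  by_cases hlong : ∃ c ∈ σ.cycleFactorsFinset, ¬c.IsSwap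
  · obtain ⟨c, hc, hc'⟩ := hlong
    have hcyc := (mem_cycleFactorsFinset_iff.1 hc).1
    exact peel c (cycleFactorsFinset_subset_of_mem hc) (by simp [hcyc.cycleType])
      (by simp [hcyc.cycleType, Ne.symm (mt card_support_eq_two.1 hc')])
      (hcyc.hasFreshSwapFactorization hc')
  push Not at hlong
  rw [count_two_cycleType_eq_card hlong] at h
  by_cases hpair : 1 < #σ.cycleFactorsFinset
  · obtain ⟨t₁, ht₁, t₂, ht₂, hne⟩ := one_lt_card.1 hpair
    have hd := cycleFactorsFinset_pairwise_disjoint σ ht₁ ht₂ hne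
    have hct : (t₁ * t₂).cycleType = {2} + {2} := by
      rw [hd.cycleType_mul, isSwap_iff_cycleType.1 (hlong t₁ ht₁),
        isSwap_iff_cycleType.1 (hlong t₂ ht₂)]
    exact peel _ (hd.cycleFactorsFinset_mul_subset (cycleFactorsFinset_subset_of_mem ht₁)
      (cycleFactorsFinset_subset_of_mem ht₂)) (by simp [hct]) (by simp [hct])
      (hasFreshSwapFactorization_swap_mul_swap (hlong t₁ ht₁) (hlong t₂ ht₂) hd)
  · obtain rfl : σ = 1 := by
      rw [← cycleFactorsFinset_eq_empty_iff, ← card_eq_zero]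
      rcases h with ⟨j, hj⟩
      omega
    exact ⟨[], ⟨⟨by simp, List.nodup_nil, by simp, rfl⟩, by simp⟩, by simp⟩

theorem hasFreshSwapFactorization_of_odd (σ : Perm α) (h : Odd (σ.cycleType.count 2))
    (hσ : 2 < #σ.support) : HasFreshSwapFactorization σ 1 := by
  have peel (β : Perm α) (hβσ : β.cycleFactorsFinset ⊆ σ.cycleFactorsFinset)
      (hβo : Odd (β.cycleType.count 2)) (hβ : HasFreshSwapFactorization β 1) :
      HasFreshSwapFactorization σ 1 := by
    rw [← cycleType_mul_inv_add hβσ, Multiset.count_add] at h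
    simpa using (hasFreshSwapFactorization_of_even _ ((Nat.odd_add'.1 h).1 hβo)).of_mul_inv hβσ hβ
  by_cases hlong : ∃ c ∈ σ.cycleFactorsFinset, ¬c.IsSwap
  · obtain ⟨c, hc, hc'⟩ := hlong
    obtain ⟨t, ht, htswap⟩ := exists_isSwap_mem_cycleFactorsFinset h.pos
    have hcyc := (mem_cycleFactorsFinset_iff.1 hc).1
    have hd := cycleFactorsFinset_pairwise_disjoint σ ht hc fun e => hc' (e ▸ htswap)
    refine peel _ (hd.cycleFactorsFinset_mul_subset (cycleFactorsFinset_subset_of_mem ht)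
      (cycleFactorsFinset_subset_of_mem hc)) ?_
      (hasFreshSwapFactorization_swap_mul_cycle htswap hcyc hc' hd)
    simp [hd.cycleType_mul, isSwap_iff_cycleType.1 htswap, hcyc.cycleType,
      Ne.symm (mt card_support_eq_two.1 hc')]
  push Not at hlong
  rw [count_two_cycleType_eq_card hlong] at h
  have h3 : 2 < #σ.cycleFactorsFinset := by
    by_contra! hle
    obtain ⟨j, hj⟩ := h
    have := card_support_eq_two.2 (isSwap_of_card_cycleFactorsFinset_eq_one (by omega) hlong)
    omega
  obtain ⟨t₁, h₁, t₂, h₂, t₃, h₃, h₁₂, h₁₃, h₂₃⟩ := two_lt_card.1 h3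
  have hd₁₂ := cycleFactorsFinset_pairwise_disjoint σ h₁ h₂ h₁₂
  have hd₁₃ := cycleFactorsFinset_pairwise_disjoint σ h₁ h₃ h₁₃
  have hd₂₃ := cycleFactorsFinset_pairwise_disjoint σ h₂ h₃ h₂₃
  refine peel _ ((hd₁₂.mul_right hd₁₃).cycleFactorsFinset_mul_subset
    (cycleFactorsFinset_subset_of_mem h₁) (hd₂₃.cycleFactorsFinset_mul_subset
      (cycleFactorsFinset_subset_of_mem h₂) (cycleFactorsFinset_subset_of_mem h₃))) ?_
    (hasFreshSwapFactorization_swap_mul_swap_mul_swap (hlong t₁ h₁) (hlong t₂ h₂) (hlong t₃ h₃)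
      hd₁₂ hd₁₃ hd₂₃)
  simp [(hd₁₂.mul_right hd₁₃).cycleType_mul, hd₂₃.cycleType_mul,
    isSwap_iff_cycleType.1 (hlong t₁ h₁), isSwap_iff_cycleType.1 (hlong t₂ h₂),
    isSwap_iff_cycleType.1 (hlong t₃ h₃), Nat.odd_iff]

end Equiv.Perm

open Equiv.Perm

theorem exists_transposition_list_general {α : Type*} [Fintype α] [DecidableEq α]
    [DecidablePred (Equiv.Perm.IsSwap : Equiv.Perm α → Prop)]
    (P : Equiv.Perm α) (n m r : ℕ)
    (hm : P.cycleFactorsFinset.card = m)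
    (hn : P.support.card = n) (hn2 : 2 < n)
    (hr : (P.cycleFactorsFinset.filter (fun c => c.IsSwap)).card = r) :
    ∃ l : List (Equiv.Perm α),
      (∀ τ ∈ l, τ.IsSwap) ∧ l.Nodup ∧
      (∀ τ ∈ l, τ ∉ P.cycleFactorsFinset) ∧
      l.prod = P ∧
      l.length = n - m + r + (if Even r then 0 else 1) := by
  rw [← count_two_cycleType] at hr
  rw [← card_cycleType_eq_card_cycleFactorsFinset] at hm
  obtain ⟨l, hl, hlen⟩ : HasFreshSwapFactorization P (if Even r then 0 else 1) := by
    split_ifs with hr'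
    · exact hasFreshSwapFactorization_of_even P (hr ▸ hr')
    · exact hasFreshSwapFactorization_of_odd P (hr ▸ Nat.not_even_iff_odd.1 hr') (hn ▸ hn2)
  have hmn := card_cycleType_le_sum P
  rw [sum_cycleType] at hlen hmn
  exact ⟨l, hl.isSwap, hl.nodup, hl.notMem_cycleFactorsFinset, hl.prod_eq, by omega⟩

/-- A permutation `P` with `m ≥ 1` nontrivial disjoint cycles, `n > 2` total entries,
and exactly `r` transposition cycle factors, equals the product of some list of
`n - m + r + ε_r` pairwise distinct transpositions, none a cycle factor of `P`. -/
theorem exists_transposition_list {α : Type*} [Fintype α] [DecidableEq α]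
    [DecidablePred (Equiv.Perm.IsSwap : Equiv.Perm α → Prop)]
    (P : Equiv.Perm α) (n m r : ℕ)
    (hm : P.cycleFactorsFinset.card = m) (hm1 : 1 ≤ m)
    (hn : P.support.card = n) (hn2 : 2 < n)
    (hr : (P.cycleFactorsFinset.filter (fun c => c.IsSwap)).card = r) :
    ∃ l : List (Equiv.Perm α),
      (∀ τ ∈ l, τ.IsSwap) ∧ l.Nodup ∧
      (∀ τ ∈ l, τ ∉ P.cycleFactorsFinset) ∧
      l.prod = P ∧
      l.length = n - m + r + (if Even r then 0 else 1) :=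
  exists_transposition_list_general P n m r hm hn hn2 hr
end

section
/- A transposition cannot be written as the product of a list of fewer than 5 pairwise distinct transpositions none of which equals that transposition. Equivalently, if a list of u pairwise distinct transpositions, none equal to the transposition (1 2), has product equal to (1 2), then u ≥ 5. -/
/-!
Comparing signs, a product of transpositions equal to a transposition has odd length, and a
single factor would be `swap a b` itself, so only three factors remain to be excluded. If
`t₁ t₂ t₃ = s` then `t₁ t₂ = s t₃` and `t₂ t₃ = t₁ s`. The support of a product of two distinct
transpositions is the union of their supports, so the supports `A, B, C, S` of `t₁, t₂, t₃, s`
satisfy `A ∪ B = S ∪ C` and `B ∪ C = A ∪ S`. Both `B` and `S` then contain a point of `A \ C`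
and a point of `C \ A`, hence `B = S` and `t₂ = s`.
-/

open Equiv Finset

theorem Finset.eq_of_union_eq_union_of_card_le_two {α : Type*} [DecidableEq α]
    {A B C S : Finset α} (hAC : A ≠ C) (hcard : #A = #C) (hB : #B ≤ 2) (hS : #S ≤ 2)
    (h₁ : A ∪ B = S ∪ C) (h₂ : B ∪ C = A ∪ S) : B = S := by
  obtain ⟨x, hxA, hxC⟩ := not_subset.mp fun h => hAC (eq_of_subset_of_card_le h hcard.ge)
  obtain ⟨y, hyC, hyA⟩ := not_subset.mp fun h => hAC (eq_of_subset_of_card_le h hcard.le).symm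
  have hxy : x ≠ y := by rintro rfl; exact hyA hxA
  have eq_pair : ∀ T : Finset α, x ∈ T → y ∈ T → #T ≤ 2 → T = {x, y} := fun T hx hy hT =>
    (eq_of_subset_of_card_le (insert_subset hx (singleton_subset_iff.mpr hy))
      (by rwa [card_pair hxy])).symm
  have hxB : x ∈ B := (mem_union.mp (h₂ ▸ mem_union_left S hxA)).resolve_right hxC
  have hxS : x ∈ S := (mem_union.mp (h₁ ▸ mem_union_left B hxA)).resolve_right hxC
  have hyB : y ∈ B := (mem_union.mp (h₁.symm ▸ mem_union_right S hyC)).resolve_left hyA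
  have hyS : y ∈ S := (mem_union.mp (h₂ ▸ mem_union_right B hyC)).resolve_left hyA
  rw [eq_pair B hxB hyB hB, eq_pair S hxS hyS hS]

namespace Equiv.Perm

variable {α : Type*} [DecidableEq α]

theorem IsSwap.mul_self {σ : Perm α} (h : σ.IsSwap) : σ * σ = 1 := by
  obtain ⟨x, y, -, rfl⟩ := h
  exact swap_mul_self x y

theorem IsSwap.eq_swap_apply {σ : Perm α} (h : σ.IsSwap) {x : α} (hx : σ x ≠ x) :
    σ = swap x (σ x) := by
  obtain ⟨y, z, -, rfl⟩ := h
  rcases (swap_apply_ne_self_iff.mp hx).2 with rfl | rfl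
  · rw [swap_apply_left]
  · rw [swap_apply_right, swap_comm]

variable [Fintype α]

theorem IsSwap.eq_of_support_eq {σ τ : Perm α} (hσ : σ.IsSwap) (hτ : τ.IsSwap)
    (h : σ.support = τ.support) : σ = τ := by
  obtain ⟨x, y, hxy, rfl⟩ := hσ
  rw [support_swap hxy] at h
  have hx : τ x ≠ x := mem_support.mp (h ▸ mem_insert_self x {y})
  have hτx : τ x = y := by
    have := apply_mem_support.mpr (mem_support.mpr hx)
    rw [← h] at this
    simpa [hx] using this
  rw [hτ.eq_swap_apply hx, hτx]

theorem IsSwap.support_mul {σ τ : Perm α} (hσ : σ.IsSwap) (hτ : τ.IsSwap) (hne : σ ≠ τ) :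
    (σ * τ).support = σ.support ∪ τ.support := by
  refine le_antisymm (support_mul_le σ τ) fun x hx => mem_support.mpr fun hfix => ?_
  rw [mul_apply] at hfix
  by_cases hτx : τ x = x
  · rw [hτx] at hfix
    rcases mem_union.mp hx with h | h <;> exact mem_support.mp h (by assumption)
  · refine hne ?_
    rw [hσ.eq_swap_apply (by rwa [hfix, ne_comm]), hfix, swap_comm, ← hτ.eq_swap_apply hτx]

theorem odd_length_of_prod_isSwap {l : List (Perm α)} (hl : ∀ τ ∈ l, τ.IsSwap)
    (h : l.prod.IsSwap) : Odd l.length := by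
  have := sign_prod_list_swap hl
  rw [h.sign_eq] at this
  exact (neg_one_pow_eq_neg_one_iff_odd (by decide)).mp this.symm

theorem mul_mul_ne_of_isSwap {s t₁ t₂ t₃ : Perm α} (hs : s.IsSwap)
    (h₁ : t₁.IsSwap) (h₂ : t₂.IsSwap) (h₃ : t₃.IsSwap)
    (h₁₂ : t₁ ≠ t₂) (h₁₃ : t₁ ≠ t₃) (h₂₃ : t₂ ≠ t₃)
    (h₁s : t₁ ≠ s) (h₂s : t₂ ≠ s) (h₃s : t₃ ≠ s) : t₁ * t₂ * t₃ ≠ s := by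
  intro h
  have e₁ : t₁ * t₂ = s * t₃ := by rw [← h, mul_assoc _ t₃, h₃.mul_self, mul_one]
  have e₂ : t₂ * t₃ = t₁ * s := by rw [← h, mul_assoc t₁, ← mul_assoc, h₁.mul_self, one_mul]
  have u₁ := congrArg support e₁
  have u₂ := congrArg support e₂
  rw [h₁.support_mul h₂ h₁₂, hs.support_mul h₃ (Ne.symm h₃s)] at u₁
  rw [h₂.support_mul h₃ h₂₃, h₁.support_mul hs h₁s] at u₂
  have card_two {σ : Perm α} (hσ : σ.IsSwap) : #σ.support = 2 := card_support_eq_two.mpr hσ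
  refine h₂s (h₂.eq_of_support_eq hs (eq_of_union_eq_union_of_card_le_two
    (fun h => h₁₃ (h₁.eq_of_support_eq h₃ h)) ((card_two h₁).trans (card_two h₃).symm)
    (card_two h₂).le (card_two hs).le u₁ u₂))

end Equiv.Perm

/-- A transposition `(1 2)` cannot be written as the product of a list of fewer
than 5 pairwise distinct transpositions none of which equals `(1 2)`. -/
theorem five_le_of_prod_eq_swap {α : Type*} [Fintype α] [DecidableEq α]
    (a b : α) (hab : a ≠ b)
    (l : List (Equiv.Perm α)) (u : ℕ)
    (hsw : ∀ τ ∈ l, τ.IsSwap) (hnd : l.Nodup)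
    (hne : ∀ τ ∈ l, τ ≠ Equiv.swap a b)
    (hprod : l.prod = Equiv.swap a b) (hu : l.length = u) :
    5 ≤ u := by
  have hswap : (swap a b).IsSwap := ⟨a, b, hab, rfl⟩
  obtain ⟨k, hk⟩ := Perm.odd_length_of_prod_isSwap hsw (hprod ▸ hswap)
  have h₁ : l.length ≠ 1 := fun hl => by
    obtain ⟨t, rfl⟩ := List.length_eq_one_iff.mp hl
    exact hne t (by simp) (by simpa using hprod)
  have h₃ : l.length ≠ 3 := fun hl => by
    obtain ⟨t₁, t₂, t₃, rfl⟩ := List.length_eq_three.mp hl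
    simp only [List.nodup_cons, List.mem_cons, List.not_mem_nil, not_or] at hnd
    refine Perm.mul_mul_ne_of_isSwap hswap (hsw _ (by simp)) (hsw _ (by simp))
      (hsw _ (by simp)) hnd.1.1 hnd.1.2.1 hnd.2.1.1 (hne _ (by simp)) (hne _ (by simp))
      (hne _ (by simp)) ?_
    simpa [mul_assoc] using hprod
  omega
end

section
/- No product of a list of 4 pairwise distinct transpositions of a finite type equals the identity permutation. -/
/-!
If `a * b * c * d = 1` then `a * b = d * c`. For two distinct transpositions the support of the
product is the union of their supports, so `a, b, c, d` are four distinct transpositions of the set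
`S = supp a ∪ supp b = supp c ∪ supp d`, which has at most four points. If `S` has at most three
points there are not four transpositions of it. If it has four, both products are products of two
disjoint transpositions, and the cycle decomposition gives `{a, b} = {d, c}`.
-/

open Finset

namespace Equiv.Perm

variable {α : Type*} [DecidableEq α] {f g : Perm α}

theorem IsSwap.inv_eq (hf : f.IsSwap) : f⁻¹ = f := by
  obtain ⟨x, y, -, rfl⟩ := hf
  exact swap_inv x y

theorem IsSwap.eq_swap_apply_s6 (hf : f.IsSwap) {x : α} (hx : f x ≠ x) : f = swap x (f x) :=
  hf.isCycle.eq_swap_of_apply_apply_eq_self hx <| by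
    nth_rw 1 [← hf.inv_eq]
    exact inv_eq_iff_eq.2 rfl

theorem IsSwap.eq_of_apply_eq (hf : f.IsSwap) (hg : g.IsSwap) {x : α} (hx : f x ≠ x)
    (h : f x = g x) : f = g := by
  rw [hf.eq_swap_apply_s6 hx, hg.eq_swap_apply_s6 (h ▸ hx), h]

variable [Fintype α]

theorem IsSwap.eq_of_support_eq_s6 (hf : f.IsSwap) (hg : g.IsSwap) (h : f.support = g.support) :
    f = g := by
  obtain ⟨x, y, hxy, rfl⟩ := hf
  have hx : x ∈ g.support := by simp [← h, support_swap hxy]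
  have hgx : g x ∈ ({x, y} : Finset α) := support_swap hxy ▸ h ▸ apply_mem_support.2 hx
  have hgx' : g x = y := by simpa [mem_support.1 hx] using hgx
  exact (hg.eq_of_apply_eq ⟨x, y, hxy, rfl⟩ (mem_support.1 hx) (by simp [hgx'])).symm

theorem IsSwap.support_subset_support_mul (hf : f.IsSwap) (hg : g.IsSwap) (hfg : f ≠ g) :
    f.support ⊆ (f * g).support := by
  intro x hx
  rw [mem_support] at hx ⊢
  intro hfgx
  have hgx : g x = f x := by rw [← hf.inv_eq, eq_inv_iff_eq]; exact hfgx
  exact hfg (hf.eq_of_apply_eq hg hx hgx.symm)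

theorem IsSwap.support_mul_s6 (hf : f.IsSwap) (hg : g.IsSwap) (hfg : f ≠ g) :
    (f * g).support = f.support ∪ g.support := by
  refine (support_mul_le f g).antisymm (union_subset (hf.support_subset_support_mul hg hfg) ?_)
  rw [← support_inv (f * g), mul_inv_rev, hf.inv_eq, hg.inv_eq]
  exact hg.support_subset_support_mul hf hfg.symm

theorem IsSwap.cycleFactorsFinset_mul (hf : f.IsSwap) (hg : g.IsSwap) (hfg : Disjoint f g) :
    (f * g).cycleFactorsFinset = {f, g} := by
  rw [hfg.cycleFactorsFinset_mul_eq_union, hf.isCycle.cycleFactorsFinset_eq_singleton,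
    hg.isCycle.cycleFactorsFinset_eq_singleton]
  rfl

theorem card_le_choose_of_isSwap {T : Finset (Perm α)} {S : Finset α}
    (hT : ∀ τ ∈ T, τ.IsSwap ∧ τ.support ⊆ S) : #T ≤ (#S).choose 2 := by
  have hinj : Set.InjOn support (T : Set (Perm α)) := fun f hf g hg h =>
    (hT f hf).1.eq_of_support_eq_s6 (hT g hg).1 h
  rw [← card_image_of_injOn hinj, ← card_powersetCard]
  refine card_le_card fun s hs => ?_
  obtain ⟨τ, hτ, rfl⟩ := mem_image.1 hs
  exact mem_powersetCard.2 ⟨(hT τ hτ).2, card_support_eq_two.2 (hT τ hτ).1⟩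

theorem IsSwap.mul_ne_mul {a b c d : Perm α} (ha : a.IsSwap) (hb : b.IsSwap) (hc : c.IsSwap)
    (hd : d.IsSwap) (hab : a ≠ b) (hac : a ≠ c) (had : a ≠ d) (hbc : b ≠ c) (hbd : b ≠ d)
    (hcd : c ≠ d) : a * b ≠ c * d := by
  intro h
  set S := a.support ∪ b.support with hS
  have hS' : S = c.support ∪ d.support := by
    rw [hS, ← ha.support_mul_s6 hb hab, h, hc.support_mul_s6 hd hcd]
  have hS_le : #S ≤ 4 := (card_union_le _ _).trans (by simp [card_support_eq_two.2, ha, hb])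
  by_cases hS_eq : #S = 4
  · have hdisj : ∀ {f g : Perm α}, f.IsSwap → g.IsSwap → S = f.support ∪ g.support →
        Disjoint f g := fun hf hg hfg => by
      rw [disjoint_iff_disjoint_support, ← card_union_eq_card_add_card, ← hfg,
        card_support_eq_two.2 hf, card_support_eq_two.2 hg, hS_eq]
    have hfactors := congrArg cycleFactorsFinset h
    rw [ha.cycleFactorsFinset_mul hb (hdisj ha hb hS), hc.cycleFactorsFinset_mul hd
      (hdisj hc hd hS')] at hfactors
    have ha_mem : a ∈ ({c, d} : Finset (Perm α)) := hfactors ▸ mem_insert_self a {b}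
    simp only [mem_insert, mem_singleton] at ha_mem
    exact ha_mem.elim hac had
  · have hfour : #({a, b, c, d} : Finset (Perm α)) = 4 :=
      card_eq_four.2 ⟨a, b, c, d, hab, hac, had, hbc, hbd, hcd, rfl⟩
    have hle := card_le_choose_of_isSwap (T := {a, b, c, d}) (S := S) (by
      simp only [mem_insert, mem_singleton]
      rintro τ (rfl | rfl | rfl | rfl)
      exacts [⟨ha, subset_union_left⟩, ⟨hb, subset_union_right⟩,
        ⟨hc, hS' ▸ subset_union_left⟩, ⟨hd, hS' ▸ subset_union_right⟩])
    have hchoose : (#S).choose 2 ≤ 3 := Nat.choose_le_choose 2 (show #S ≤ 3 by omega)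
    omega

end Equiv.Perm

open Equiv.Perm in
/-- No product of a list of 4 pairwise distinct transpositions of a finite type
equals the identity permutation. -/
theorem prod_four_distinct_swaps_ne_one {α : Type*} [Fintype α] [DecidableEq α]
    (l : List (Equiv.Perm α))
    (hlen : l.length = 4) (hnd : l.Nodup) (hsw : ∀ τ ∈ l, τ.IsSwap) :
    l.prod ≠ 1 := by
  match l, hlen with
  | [a, b, c, d], _ =>
    simp only [List.nodup_cons, List.mem_cons, List.not_mem_nil, List.nodup_nil, not_or,
      or_false, and_true] at hnd
    obtain ⟨⟨hab, hac, had⟩, ⟨hbc, hbd⟩, hcd, -⟩ := hnd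
    simp only [List.mem_cons, List.not_mem_nil, or_false, forall_eq_or_imp, forall_eq] at hsw
    obtain ⟨ha, hb, hc, hd⟩ := hsw
    intro hprod
    have hab_dc : a * b = d * c := by
      rw [← hd.inv_eq, ← hc.inv_eq, ← mul_inv_rev]
      exact eq_inv_of_mul_eq_one_left (by simpa [mul_assoc] using hprod)
    exact IsSwap.mul_ne_mul ha hb hd hc hab had hac hbd hbc (Ne.symm hcd) hab_dc
end

section
/- For every n ≥ 5, if a list of pairwise distinct transpositions in the symmetric group on {1, ..., n}, none equal to (1 2), has product equal to (1 2)(3 4 5 ... n), then the list has length at least n. Consequently the minimal number of such transpositions needed is exactly n. -/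
/-!
Read the transpositions as the edges of a graph on `{1, …, n}`. A point and its image under
the product always lie in the same connected component, so `{1, 2}` and `{3, …, n}` each lie
within a single component. Since `(1 2)` is excluded, the transposition moving `1` joins it to a
point `≥ 3`; hence the graph is connected and has at least `n - 1` edges. The product has sign
`(-1) ^ n`, so the number of transpositions has the parity of `n` and is at least `n`. The
bound is attained by `(3 1)(2 3)(3 4)⋯(n-1 n)(n 1)`.
-/

open Equiv Equiv.Perm
open Function (uncurry)

section Swaps

variable {α : Type*} [DecidableEq α]

def swapGraph (ps : List (α × α)) : SimpleGraph α :=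
  SimpleGraph.fromEdgeSet ((ps.map (uncurry Sym2.mk)).toFinset : Set (Sym2 α))

theorem swapGraph_adj_of_mem {ps : List (α × α)} {a b : α} (h : (a, b) ∈ ps) (hab : a ≠ b) :
    (swapGraph ps).Adj a b := by
  simpa [swapGraph, hab] using ⟨a, b, h, Or.inl ⟨rfl, rfl⟩⟩

theorem swapGraph_mono {ps qs : List (α × α)} (h : ps ⊆ qs) : swapGraph ps ≤ swapGraph qs :=
  SimpleGraph.fromEdgeSet_mono <| Finset.coe_subset.2 fun _ he =>
    List.mem_toFinset.2 <| List.map_subset _ h <| List.mem_toFinset.1 he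

theorem swapGraph_reachable_swap_apply {ps : List (α × α)} {a b : α} (h : (a, b) ∈ ps) (x : α) :
    (swapGraph ps).Reachable x (swap a b x) := by
  rw [swap_apply_def]
  split_ifs with hxa hxb
  · subst hxa
    rcases eq_or_ne x b with rfl | hab
    · rfl
    · exact (swapGraph_adj_of_mem h hab).reachable
  · subst hxb
    rcases eq_or_ne a x with rfl | hab
    · rfl
    · exact (swapGraph_adj_of_mem h hab).reachable.symm
  · rfl

theorem swapGraph_reachable_prod_apply (ps : List (α × α)) (x : α) :
    (swapGraph ps).Reachable x ((ps.map (uncurry swap)).prod x) := by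
  induction ps generalizing x with
  | nil => rfl
  | cons p ps ih =>
    rw [List.map_cons, List.prod_cons, Perm.mul_apply]
    exact ((ih x).mono (swapGraph_mono (List.subset_cons_self p ps))).trans
      (swapGraph_reachable_swap_apply List.mem_cons_self _)

theorem card_edgeSet_swapGraph_le (ps : List (α × α)) :
    Nat.card (swapGraph ps).edgeSet ≤ ps.length := by
  calc Nat.card (swapGraph ps).edgeSet
      ≤ Nat.card (↑(ps.map (uncurry Sym2.mk)).toFinset : Set (Sym2 α)) :=
        Nat.card_mono (Finset.finite_toSet _) (by simp [swapGraph])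
    _ ≤ ps.length := by
      simpa only [Nat.card_coe_set_eq, Set.ncard_coe_finset, List.length_map]
        using List.toFinset_card_le (ps.map (uncurry Sym2.mk))

theorem card_le_length_add_one_of_swapGraph_connected [Finite α] {ps : List (α × α)}
    (h : (swapGraph ps).Connected) : Nat.card α ≤ ps.length + 1 :=
  h.card_vert_le_card_edgeSet_add_one.trans (by grw [card_edgeSet_swapGraph_le])

theorem exists_adj_swap_mem_of_prod_apply_ne {ps : List (α × α)} {x : α}
    (h : (ps.map (uncurry swap)).prod x ≠ x) :
    ∃ y, (swapGraph ps).Adj x y ∧ swap x y ∈ ps.map (uncurry swap) := by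
  obtain ⟨τ, hτ, hτx⟩ : ∃ τ ∈ ps.map (uncurry swap), τ x ≠ x := by
    by_contra! hfix
    exact h (Subgroup.list_prod_mem (MulAction.stabilizer (Perm α) x) hfix)
  obtain ⟨⟨a, b⟩, hab, rfl⟩ := List.mem_map.1 hτ
  obtain ⟨hne, rfl | rfl⟩ := swap_apply_ne_self_iff.1 hτx
  · exact ⟨b, swapGraph_adj_of_mem hab hne, hτ⟩
  · exact ⟨a, (swapGraph_adj_of_mem hab hne).symm, swap_comm a x ▸ hτ⟩

theorem sign_prod_map_uncurry_swap [Fintype α] {ps : List (α × α)} (h : ∀ p ∈ ps, p.1 ≠ p.2) :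
    sign (ps.map (uncurry swap)).prod = (-1) ^ ps.length := by
  rw [sign_prod_list_swap, List.length_map]
  simpa using fun τ a b hab hτ => hτ ▸ ⟨a, b, h _ hab, rfl⟩

theorem length_mod_two_eq_of_prod_map_uncurry_swap_eq [Fintype α] {ps qs : List (α × α)}
    (hps : ∀ p ∈ ps, p.1 ≠ p.2) (hqs : ∀ q ∈ qs, q.1 ≠ q.2)
    (h : (ps.map (uncurry swap)).prod = (qs.map (uncurry swap)).prod) :
    ps.length % 2 = qs.length % 2 := by
  have hsign := congrArg sign h
  rw [sign_prod_map_uncurry_swap hps, sign_prod_map_uncurry_swap hqs,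
    Int.units_pow_eq_pow_mod_two, Int.units_pow_eq_pow_mod_two (n := qs.length)] at hsign
  rcases Nat.mod_two_eq_zero_or_one ps.length with hp | hp <;>
    rcases Nat.mod_two_eq_zero_or_one qs.length with hq | hq <;> simp_all

-- `sign` and edge counting need a finite type, so swaps supported on `s` are moved to `Perm s`.
theorem exists_map_ofSubtype_swap {s : Finset α} {l : List (Perm α)}
    (hl : ∀ τ ∈ l, ∃ a b, a ∈ s ∧ b ∈ s ∧ a ≠ b ∧ τ = swap a b) :
    ∃ ps : List (s × s), (∀ p ∈ ps, p.1 ≠ p.2) ∧ ps.map (ofSubtype ∘ uncurry swap) = l := by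
  induction l with
  | nil => exact ⟨[], by simp, rfl⟩
  | cons τ l ih =>
    rw [List.forall_mem_cons] at hl
    obtain ⟨⟨a, b, ha, hb, hab, rfl⟩, hl⟩ := hl
    obtain ⟨ps, hps, rfl⟩ := ih hl
    refine ⟨(⟨a, ha⟩, ⟨b, hb⟩) :: ps, ?_, ?_⟩
    · simpa [hab] using hps
    · simp [ofSubtype_swap_eq]

theorem Equiv.swap_eq_swap_iff {a b c d : α} (hab : a ≠ b) :
    swap a b = swap c d ↔ a = c ∧ b = d ∨ a = d ∧ b = c := by
  constructor
  · intro h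
    have ha := congrArg (· a) h
    simp only [swap_apply_left, swap_apply_def] at ha
    split_ifs at ha with hac had
    · exact Or.inl ⟨hac, ha⟩
    · exact Or.inr ⟨had, ha⟩
    · exact absurd ha.symm hab
  · rintro (⟨rfl, rfl⟩ | ⟨rfl, rfl⟩)
    · rfl
    · exact swap_comm a b

end Swaps

theorem prod_map_swap_add_one_range' (a m : ℕ) :
    ((List.range' a m).map fun i => swap i (i + 1)).prod = (List.range' a (m + 1)).formPerm := by
  rw [List.formPerm]
  congr 1
  apply List.ext_getElem <;> simp [List.tail_range', add_right_comm]

theorem formPerm_range'_apply (a m i : ℕ) (hi : i < m) :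
    (List.range' a m).formPerm (a + i) = a + (i + 1) % m := by
  have h := List.formPerm_apply_getElem (List.range' a m) List.nodup_range' i (by simpa using hi)
  simpa using h

theorem formPerm_range'_apply_of_lt {a m k : ℕ} (hak : a ≤ k) (hk : k + 1 < a + m) :
    (List.range' a m).formPerm k = k + 1 := by
  obtain ⟨i, rfl⟩ := Nat.exists_eq_add_of_le hak
  rw [formPerm_range'_apply _ _ _ (by omega), Nat.mod_eq_of_lt (by omega), add_assoc]

theorem formPerm_range'_apply_add (a m : ℕ) : (List.range' a (m + 1)).formPerm (a + m) = a := by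
  simp [formPerm_range'_apply]

theorem formPerm_range'_apply_of_lt_left {a m k : ℕ} (hk : k < a) :
    (List.range' a m).formPerm k = k :=
  List.formPerm_apply_of_notMem (by simp [List.mem_range'_1]; omega)

namespace MinUndo

def witness (n : ℕ) : List (Perm ℕ) :=
  swap 3 1 :: swap 2 3 :: (List.range' 3 (n - 3)).map (fun i => swap i (i + 1)) ++ [swap n 1]

theorem witness_length {n : ℕ} (hn : 3 ≤ n) : (witness n).length = n := by
  simp only [witness, List.cons_append, List.length_cons, List.length_append, List.length_map,
    List.length_range', List.length_nil]
  omega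

theorem witness_nodup {n : ℕ} (hn : 4 ≤ n) : (witness n).Nodup := by
  simp only [witness, List.cons_append, List.nodup_cons, List.nodup_append, List.mem_cons,
    List.mem_append, List.mem_map, List.mem_range'_1, List.nodup_map_iff_inj_on List.nodup_range',
    List.nodup_nil, List.not_mem_nil]
  grind [swap_eq_swap_iff]

theorem witness_prod {n : ℕ} (hn : 3 ≤ n) :
    (witness n).prod = swap 1 2 * (List.range' 3 (n - 2)).formPerm := by
  obtain ⟨m, rfl⟩ : ∃ m, n = 3 + m := ⟨n - 3, by omega⟩
  rw [show 3 + m - 2 = m + 1 by omega]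
  set c := (List.range' 3 (m + 1)).formPerm
  have hconj : c * swap (3 + m) 1 = swap 3 1 * c := by
    rw [mul_swap_eq_swap_mul, formPerm_range'_apply_add,
      formPerm_range'_apply_of_lt_left (by norm_num)]
  simp only [witness, show 3 + m - 3 = m by omega, List.cons_append, List.prod_cons,
    List.prod_append, List.prod_nil, mul_one, prod_map_swap_add_one_range']
  rw [hconj, ← swap_mul_swap_mul_swap (x := 2) (y := 3) (z := 1) (by norm_num) (by norm_num)]
  simp only [mul_assoc]

theorem witness_mem {n : ℕ} (hn : 3 ≤ n) :
    ∀ τ ∈ witness n, ∃ a b, a ∈ Finset.Icc 1 n ∧ b ∈ Finset.Icc 1 n ∧ a ≠ b ∧ τ = swap a b := by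
  intro τ hτ
  simp only [witness, List.cons_append, List.mem_cons, List.mem_append, List.mem_map,
    List.mem_range'_1, List.not_mem_nil, or_false] at hτ
  rcases hτ with rfl | rfl | ⟨i, hi, rfl⟩ | rfl <;>
    exact ⟨_, _, by simp; omega, by simp; omega, by omega, rfl⟩

theorem witness_ne_swap {n : ℕ} (hn : 3 ≤ n) : ∀ τ ∈ witness n, τ ≠ swap 1 2 := by
  intro τ hτ
  simp only [witness, List.cons_append, List.mem_cons, List.mem_append, List.mem_map,
    List.mem_range'_1, List.not_mem_nil, or_false] at hτ
  rcases hτ with rfl | rfl | ⟨i, hi, rfl⟩ | rfl <;>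
    rw [Ne, swap_eq_swap_iff (by omega)] <;> omega

theorem swapGraph_connected {n : ℕ} (hn : 3 ≤ n) {ps : List (Finset.Icc 1 n × Finset.Icc 1 n)}
    (hprod : ofSubtype (ps.map (uncurry swap)).prod = swap 1 2 * (List.range' 3 (n - 2)).formPerm)
    (hne : ∀ τ ∈ ps.map (uncurry swap), ofSubtype τ ≠ swap 1 2) :
    (swapGraph ps).Connected := by
  set σ := (ps.map (uncurry swap)).prod
  have hσ (x) : (σ x : ℕ) = (swap 1 2 * (List.range' 3 (n - 2)).formPerm : Perm ℕ) x := by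
    rw [← hprod, ofSubtype_apply_coe]
  let x₃ : Finset.Icc 1 n := ⟨3, by simp; omega⟩
  have hchain : ∀ k, 3 ≤ k → ∀ x : Finset.Icc 1 n, (x : ℕ) = k → (swapGraph ps).Reachable x₃ x := by
    intro k hk
    induction k, hk using Nat.le_induction with
    | base => intro x hx; rw [show x = x₃ from Subtype.ext hx]
    | succ k hk ih =>
      rintro x hx
      have hkn : k < n := by have := x.2; rw [Finset.mem_Icc] at this; omega
      let y : Finset.Icc 1 n := ⟨k, by simp; omega⟩
      have hσy : σ y = x := by
        apply Subtype.ext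
        rw [hσ, hx, Perm.mul_apply, formPerm_range'_apply_of_lt hk (by omega),
          swap_apply_of_ne_of_ne (by omega) (by omega)]
      exact hσy ▸ (ih y rfl).trans (swapGraph_reachable_prod_apply ps y)
  let x₁ : Finset.Icc 1 n := ⟨1, by simp; omega⟩
  have hσ₁ : (σ x₁ : ℕ) = 2 := by
    rw [hσ, Perm.mul_apply, formPerm_range'_apply_of_lt_left (by norm_num), swap_apply_left]
  have h₁₃ : (swapGraph ps).Reachable x₁ x₃ := by
    obtain ⟨y, hadj, hy⟩ := exists_adj_swap_mem_of_prod_apply_ne (x := x₁) fun h => by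
      rw [h] at hσ₁; exact absurd hσ₁ (by simp [x₁])
    have hy₂ : (y : ℕ) ≠ 2 := fun h => hne _ hy (by rw [ofSubtype_swap_eq, h])
    have hy₁ : (y : ℕ) ≠ 1 := fun h => hadj.ne (Subtype.ext h.symm)
    have hy := y.2
    simp only [Finset.mem_Icc] at hy
    exact hadj.reachable.trans (hchain y (by omega) y rfl).symm
  rw [SimpleGraph.connected_iff_exists_forall_reachable]
  refine ⟨x₃, fun x => ?_⟩
  have hx := x.2
  rw [Finset.mem_Icc] at hx
  obtain hx₁ | hx₂ | hx₃ : (x : ℕ) = 1 ∨ (x : ℕ) = 2 ∨ 3 ≤ (x : ℕ) := by omega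
  · rw [show x = x₁ from Subtype.ext hx₁]
    exact h₁₃.symm
  · rw [show x = σ x₁ from Subtype.ext (hx₂.trans hσ₁.symm)]
    exact h₁₃.symm.trans (swapGraph_reachable_prod_apply ps x₁)
  · exact hchain _ hx₃ x rfl

theorem le_length_of_prod_eq {n : ℕ} (hn : 3 ≤ n) {l : List (Perm ℕ)}
    (hmem : ∀ τ ∈ l, ∃ a b, a ∈ Finset.Icc 1 n ∧ b ∈ Finset.Icc 1 n ∧ a ≠ b ∧ τ = swap a b)
    (hne : ∀ τ ∈ l, τ ≠ swap 1 2)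
    (hprod : l.prod = swap 1 2 * (List.range' 3 (n - 2)).formPerm) : n ≤ l.length := by
  obtain ⟨ps, hps, rfl⟩ := exists_map_ofSubtype_swap hmem
  obtain ⟨qs, hqs, hw⟩ := exists_map_ofSubtype_swap (witness_mem hn)
  rw [← List.map_map] at hprod hne hw
  rw [← map_list_prod] at hprod
  rw [List.forall_mem_map] at hne
  have hcard := card_le_length_add_one_of_swapGraph_connected (swapGraph_connected hn hprod hne)
  rw [Nat.card_eq_fintype_card, Fintype.card_coe, Nat.card_Icc] at hcard
  -- the witness supplies the sign of the target
  have hparity := length_mod_two_eq_of_prod_map_uncurry_swap_eq hps hqs <| ofSubtype_injective <| by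
    rw [hprod, map_list_prod, hw, witness_prod hn]
  have hlen := congrArg List.length hw
  simp only [List.length_map, witness_length hn] at hparity hlen ⊢
  omega

end MinUndo

/-- For every `n ≥ 5`, any list of pairwise distinct transpositions of the
symmetric group on `{1, ..., n}`, none equal to `(1 2)`, whose product is
`(1 2)(3 4 5 ... n)`, has length at least `n`; and the minimal number of such
transpositions needed is exactly `n`. -/
theorem min_undo_Fn (n : ℕ) (hn : 5 ≤ n) :
    (∀ l : List (Equiv.Perm ℕ),
      (∀ τ ∈ l, ∃ a b : ℕ, a ∈ Finset.Icc 1 n ∧ b ∈ Finset.Icc 1 n ∧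
        a ≠ b ∧ τ = Equiv.swap a b) →
      l.Nodup →
      (∀ τ ∈ l, τ ≠ Equiv.swap 1 2) →
      l.prod = Equiv.swap 1 2 * (List.range' 3 (n - 2)).formPerm →
      n ≤ l.length) ∧
    IsLeast {w : ℕ | ∃ l : List (Equiv.Perm ℕ),
      (∀ τ ∈ l, ∃ a b : ℕ, a ∈ Finset.Icc 1 n ∧ b ∈ Finset.Icc 1 n ∧
        a ≠ b ∧ τ = Equiv.swap a b) ∧
      l.Nodup ∧
      (∀ τ ∈ l, τ ≠ Equiv.swap 1 2) ∧
      l.prod = Equiv.swap 1 2 * (List.range' 3 (n - 2)).formPerm ∧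
      l.length = w} n := by
  have hn₃ : 3 ≤ n := by omega
  refine ⟨fun l hmem _ hne hprod => MinUndo.le_length_of_prod_eq hn₃ hmem hne hprod,
    ⟨MinUndo.witness n, MinUndo.witness_mem hn₃, MinUndo.witness_nodup (by omega),
      MinUndo.witness_ne_swap hn₃, MinUndo.witness_prod hn₃, MinUndo.witness_length hn₃⟩, ?_⟩
  rintro w ⟨l, hmem, -, hne, hprod, rfl⟩
  exact MinUndo.le_length_of_prod_eq hn₃ hmem hne hprod
end

section
/- If a list of pairwise distinct transpositions in the symmetric group on {1, ..., 9}, none equal to (1 2), has product equal to (1 2)(3 4 5 6 7 8 9), then the list has length at least 9. -/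
/-!
Let `G` be the graph on `{1, …, 9}` whose edges are the transpositions of the list. A
transposition moves a point only along an edge, so every cycle of the product lies in a connected
component of `G`. The path from `1` to `2` cannot start with the forbidden edge `(1 2)`, so it runs
through the cycle `(3 4 5 6 7 8 9)`; hence `G` is connected and has at least `8` edges. The product
is odd, so the list has odd length, and therefore at least `9` transpositions.
-/

open Equiv Equiv.Perm

theorem List.exists_map_eq_of_forall_mem {α β : Type*} {f : α → β} {P : α → Prop} {l : List β}
    (h : ∀ y ∈ l, ∃ x, P x ∧ f x = y) : ∃ m : List α, (∀ x ∈ m, P x) ∧ m.map f = l := by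
  induction l with
  | nil => exact ⟨[], by simp, rfl⟩
  | cons y l ih =>
    obtain ⟨x, hx, rfl⟩ := h y mem_cons_self
    obtain ⟨m, hm, rfl⟩ := ih fun y hy => h y (mem_cons_of_mem _ hy)
    exact ⟨x :: m, forall_mem_cons.2 ⟨hx, hm⟩, rfl⟩

namespace Equiv.Perm

variable {α : Type*}

theorem apply_mem_iff_of_forall_apply_ne {p : α → Prop} {f : Perm α}
    (h : ∀ x, f x ≠ x → p x) (x : α) : p (f x) ↔ p x := by
  by_cases hx : f x = x
  · rw [hx]
  · exact iff_of_true (h _ fun e => hx (f.injective e)) (h x hx)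

theorem exists_map_ofSubtype_swap_eq [DecidableEq α] {P : α → Prop} [DecidablePred P]
    {l : List (Perm α)} (h : ∀ τ ∈ l, ∃ a b, P a ∧ P b ∧ a ≠ b ∧ τ = swap a b) :
    ∃ p : List (Subtype P × Subtype P), (∀ q ∈ p, q.1 ≠ q.2) ∧
      (p.map fun q => swap q.1 q.2).map ofSubtype = l := by
  simp only [List.map_map]
  refine List.exists_map_eq_of_forall_mem fun τ hτ => ?_
  obtain ⟨a, b, ha, hb, hab, rfl⟩ := h τ hτ
  exact ⟨(⟨a, ha⟩, ⟨b, hb⟩), by simpa using hab, ofSubtype_swap_eq _ _⟩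

theorem sign_prod_map_swap [DecidableEq α] [Fintype α] {p : List (α × α)}
    (hp : ∀ q ∈ p, q.1 ≠ q.2) : sign (p.map fun q => swap q.1 q.2).prod = (-1) ^ p.length := by
  refine (sign_prod_list_swap fun τ hτ => ?_).trans (by rw [List.length_map])
  obtain ⟨q, hq, rfl⟩ := List.mem_map.1 hτ
  exact swap_isSwap_iff.2 (hp q hq)

end Equiv.Perm

namespace SimpleGraph

variable {α : Type*} {G : SimpleGraph α}

theorem Reachable.reachable_swap_apply [DecidableEq α] {a b : α} (h : G.Reachable a b) (x : α) :
    G.Reachable x (swap a b x) := by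
  rcases eq_or_ne x a with rfl | hxa
  · simpa using h
  rcases eq_or_ne x b with rfl | hxb
  · simpa using h.symm
  rw [swap_apply_of_ne_of_ne hxa hxb]

theorem reachable_prod_map_swap_apply [DecidableEq α] {p : List (α × α)}
    (hp : ∀ q ∈ p, G.Reachable q.1 q.2) (x : α) :
    G.Reachable x ((p.map fun q => swap q.1 q.2).prod x) := by
  induction p with
  | nil => rfl
  | cons q p ih =>
    rw [List.map_cons, List.prod_cons, mul_apply]
    exact (ih fun q hq => hp q (List.mem_cons_of_mem _ hq)).trans
      ((hp q List.mem_cons_self).reachable_swap_apply _)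

theorem reachable_of_sameCycle [Finite α] {σ : Perm α} (hσ : ∀ x, G.Reachable x (σ x)) {x y : α}
    (h : σ.SameCycle x y) : G.Reachable x y := by
  obtain ⟨n, rfl⟩ := h.exists_nat_pow_eq
  clear h
  induction n with
  | zero => rfl
  | succ n ih => rw [pow_succ', mul_apply]; exact ih.trans (hσ _)

theorem Reachable.exists_adj_ne {u v : α} (h : G.Reachable u v) (huv : u ≠ v)
    (hadj : ¬G.Adj u v) : ∃ w, G.Adj u w ∧ w ≠ v := by
  obtain ⟨p⟩ := h
  cases p with
  | nil => exact absurd rfl huv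
  | cons huw _ => exact ⟨_, huw, fun e => hadj (e ▸ huw)⟩

/-- A walk from `u` to `v` avoiding the edge `uv` leaves `u` towards a third vertex, which lies in
the cycle of `c`. -/
theorem connected_of_reachable_apply [Finite α] {σ : Perm α} (hσ : ∀ x, G.Reachable x (σ x))
    {u v c : α} (huv : σ.SameCycle u v) (hne : u ≠ v) (hadj : ¬G.Adj u v)
    (hc : ∀ w, w ≠ u → w ≠ v → σ.SameCycle c w) : G.Connected := by
  obtain ⟨w, huw, hwv⟩ := (reachable_of_sameCycle hσ huv).exists_adj_ne hne hadj
  have hcu : G.Reachable c u :=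
    (reachable_of_sameCycle hσ (hc w huw.ne.symm hwv)).trans huw.reachable.symm
  refine (connected_iff_exists_forall_reachable G).2 ⟨c, fun w => ?_⟩
  by_cases hwu : w = u
  · exact hwu ▸ hcu
  by_cases hwv : w = v
  · exact hwv ▸ hcu.trans (reachable_of_sameCycle hσ huv)
  exact reachable_of_sameCycle hσ (hc w hwu hwv)

def transpositionGraph (p : List (α × α)) : SimpleGraph α :=
  fromEdgeSet {e : Sym2 α | e ∈ p.map fun q => s(q.1, q.2)}

theorem transpositionGraph_reachable_of_mem {p : List (α × α)} {q : α × α} (hq : q ∈ p) :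
    (transpositionGraph p).Reachable q.1 q.2 := by
  by_cases h : q.1 = q.2
  · rw [h]
  · refine Adj.reachable ?_
    simpa [transpositionGraph, h] using ⟨q.1, q.2, hq, Or.inl rfl⟩

theorem transpositionGraph_reachable_prod_apply [DecidableEq α] (p : List (α × α)) (x : α) :
    (transpositionGraph p).Reachable x ((p.map fun q => swap q.1 q.2).prod x) :=
  reachable_prod_map_swap_apply (fun _ => transpositionGraph_reachable_of_mem) x

theorem swap_mem_of_transpositionGraph_adj [DecidableEq α] {p : List (α × α)} {x y : α}
    (h : (transpositionGraph p).Adj x y) : swap x y ∈ p.map fun q => swap q.1 q.2 := by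
  simp only [transpositionGraph, fromEdgeSet_adj, Set.mem_ofPred_eq, List.mem_map] at h
  obtain ⟨⟨q, hq, hqxy⟩, -⟩ := h
  rcases Sym2.eq_iff.1 hqxy with ⟨h1, h2⟩ | ⟨h1, h2⟩
  · exact List.mem_map.2 ⟨q, hq, by rw [h1, h2]⟩
  · exact List.mem_map.2 ⟨q, hq, by rw [h1, h2, swap_comm]⟩

theorem card_edgeSet_transpositionGraph_le (p : List (α × α)) :
    Nat.card (transpositionGraph p).edgeSet ≤ p.length := by
  classical
  calc Nat.card (transpositionGraph p).edgeSet
      ≤ Nat.card {e : Sym2 α | e ∈ p.map fun q => s(q.1, q.2)} :=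
        Nat.card_mono (List.finite_toSet _) (by simp [transpositionGraph])
    _ ≤ (p.map fun q => s(q.1, q.2)).length := by
        rw [← List.coe_toFinset, Nat.card_coe_set_eq, Set.ncard_coe_finset]
        exact List.toFinset_card_le _
    _ = p.length := List.length_map _

end SimpleGraph

namespace Futurama

def target : Perm ℕ := swap 1 2 * [3, 4, 5, 6, 7, 8, 9].formPerm

theorem mem_Icc_of_target_apply_ne {x : ℕ} (hx : target x ≠ x) : x ∈ Finset.Icc 1 9 := by
  contrapose! hx
  rw [Finset.mem_Icc] at hx
  rw [target, mul_apply, List.formPerm_apply_of_notMem (by simp; omega),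
    swap_apply_of_ne_of_ne (by omega) (by omega)]

def targetIcc : Perm (Finset.Icc 1 9) :=
  target.subtypePerm (apply_mem_iff_of_forall_apply_ne fun _ => mem_Icc_of_target_apply_ne)

theorem ofSubtype_targetIcc : ofSubtype targetIcc = target :=
  ofSubtype_subtypePerm _ fun _ => mem_Icc_of_target_apply_ne

theorem sign_targetIcc : sign targetIcc = -1 := by decide

theorem sameCycle_one_two : targetIcc.SameCycle ⟨1, by decide⟩ ⟨2, by decide⟩ := by decide

theorem sameCycle_three_of_ne_of_ne (v : Finset.Icc 1 9) (h1 : v ≠ ⟨1, by decide⟩)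
    (h2 : v ≠ ⟨2, by decide⟩) : targetIcc.SameCycle ⟨3, by decide⟩ v := by
  revert v
  decide

end Futurama

open SimpleGraph Futurama

theorem futurama_lower_bound_general
    (l : List (Equiv.Perm ℕ))
    (hsw : ∀ τ ∈ l, ∃ a b : ℕ, a ∈ Finset.Icc 1 9 ∧ b ∈ Finset.Icc 1 9 ∧
      a ≠ b ∧ τ = Equiv.swap a b)
    (hne : ∀ τ ∈ l, τ ≠ Equiv.swap 1 2)
    (hprod : l.prod = Equiv.swap 1 2 * ([3, 4, 5, 6, 7, 8, 9] : List ℕ).formPerm) :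
    9 ≤ l.length := by
  obtain ⟨p, hp, rfl⟩ := exists_map_ofSubtype_swap_eq hsw
  have hπ : (p.map fun q => swap q.1 q.2).prod = targetIcc :=
    ofSubtype_injective (by rw [map_list_prod, hprod, ofSubtype_targetIcc, target])
  have hodd : Odd p.length :=
    (neg_one_pow_eq_neg_one_iff_odd (by decide)).1
      ((sign_prod_map_swap hp).symm.trans (hπ ▸ sign_targetIcc))
  have hconn : (transpositionGraph p).Connected :=
    connected_of_reachable_apply (fun x => hπ ▸ transpositionGraph_reachable_prod_apply p x)
      sameCycle_one_two (by decide)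
      (fun hadj => hne _ (List.mem_map_of_mem (swap_mem_of_transpositionGraph_adj hadj))
        (ofSubtype_swap_eq _ _))
      sameCycle_three_of_ne_of_ne
  have hcard : Nat.card (Finset.Icc 1 9) ≤ p.length + 1 :=
    hconn.card_vert_le_card_edgeSet_add_one.trans
      (Nat.add_le_add_right (card_edgeSet_transpositionGraph_le p) 1)
  simp only [Nat.card_eq_fintype_card, Fintype.card_coe, Nat.card_Icc] at hcard
  obtain ⟨k, hk⟩ := hodd
  rw [List.length_map, List.length_map]
  omega

/-- If a list of pairwise distinct transpositions in the symmetric group on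
`{1, ..., 9}`, none equal to `(1 2)`, has product `(1 2)(3 4 5 6 7 8 9)`,
then the list has length at least 9. -/
theorem futurama_lower_bound
    (l : List (Equiv.Perm ℕ))
    (hsw : ∀ τ ∈ l, ∃ a b : ℕ, a ∈ Finset.Icc 1 9 ∧ b ∈ Finset.Icc 1 9 ∧
      a ≠ b ∧ τ = Equiv.swap a b)
    (hnd : l.Nodup)
    (hne : ∀ τ ∈ l, τ ≠ Equiv.swap 1 2)
    (hprod : l.prod = Equiv.swap 1 2 * ([3, 4, 5, 6, 7, 8, 9] : List ℕ).formPerm) :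
    9 ≤ l.length :=
  futurama_lower_bound_general l hsw hne hprod
end

section
/- The permutation (1 2)(3 4) cannot be written as the product of a list of fewer than 4 pairwise distinct transpositions none of which equals (1 2) or (3 4). -/
/-!
By parity, a product of transpositions equal to the even permutation `(1 2)(3 4)` has even
length, and the empty product is the identity. A product `a * b` of two transpositions moves
at most four points, and moves four only when `a` and `b` are disjoint; then `{a, b}` is the
set of cycle factors of `(1 2)(3 4)`, so `a` is `(1 2)` or `(3 4)`.
-/

open Finset

namespace Equiv.Perm

variable {α : Type*} [Fintype α] [DecidableEq α]

theorem disjoint_of_card_support_add_le {f g : Perm α}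
    (h : #f.support + #g.support ≤ #(f * g).support) : Disjoint f g := by
  rw [disjoint_iff_disjoint_support, ← card_union_eq_card_add_card]
  refine le_antisymm (card_union_le _ _) (h.trans (card_le_card ?_))
  exact support_mul_le f g

theorem IsCycle.eq_or_eq_of_mul_eq_mul {a b c d : Perm α} (ha : a.IsCycle) (hb : b.IsCycle)
    (hc : c.IsCycle) (hd : d.IsCycle) (hab : Disjoint a b) (hcd : Disjoint c d)
    (h : a * b = c * d) : a = c ∨ a = d := by
  have hfactors := congrArg cycleFactorsFinset h
  rw [hab.cycleFactorsFinset_mul_eq_union, hcd.cycleFactorsFinset_mul_eq_union,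
    ha.cycleFactorsFinset_eq_singleton, hb.cycleFactorsFinset_eq_singleton,
    hc.cycleFactorsFinset_eq_singleton, hd.cycleFactorsFinset_eq_singleton] at hfactors
  have hmem : a ∈ ({c} ∪ {d} : Finset (Perm α)) := hfactors ▸ by simp
  simpa using hmem

theorem IsSwap.eq_or_eq_of_mul_eq_mul {a b c d : Perm α} (ha : a.IsSwap) (hb : b.IsSwap)
    (hc : c.IsSwap) (hd : d.IsSwap) (hcd : Disjoint c d) (h : a * b = c * d) :
    a = c ∨ a = d := by
  have hab : Disjoint a b := by
    apply disjoint_of_card_support_add_le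
    rw [h, hcd.card_support_mul, card_support_eq_two.2 ha, card_support_eq_two.2 hb,
      card_support_eq_two.2 hc, card_support_eq_two.2 hd]
  exact ha.isCycle.eq_or_eq_of_mul_eq_mul hb.isCycle hc.isCycle hd.isCycle hab hcd h

end Equiv.Perm

open Equiv Equiv.Perm

theorem four_le_undo_two_swaps_general {α : Type*} [Fintype α] [DecidableEq α]
    (x₁ x₂ x₃ x₄ : α)
    (h12 : x₁ ≠ x₂) (h13 : x₁ ≠ x₃) (h14 : x₁ ≠ x₄)
    (h23 : x₂ ≠ x₃) (h24 : x₂ ≠ x₄) (h34 : x₃ ≠ x₄)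
    (l : List (Equiv.Perm α))
    (hsw : ∀ τ ∈ l, τ.IsSwap)
    (hne : ∀ τ ∈ l, τ ≠ Equiv.swap x₁ x₂ ∧ τ ≠ Equiv.swap x₃ x₄)
    (hprod : l.prod = Equiv.swap x₁ x₂ * Equiv.swap x₃ x₄) :
    4 ≤ l.length := by
  have hswap₁₂ : (swap x₁ x₂).IsSwap := ⟨x₁, x₂, h12, rfl⟩
  have hswap₃₄ : (swap x₃ x₄).IsSwap := ⟨x₃, x₄, h34, rfl⟩
  have hdisj : Disjoint (swap x₁ x₂) (swap x₃ x₄) := disjoint_swap_swap (by simp [*])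
  have heven : Even l.length := (prod_list_swap_mem_alternatingGroup_iff_even_length hsw).1
    (hprod ▸ mul_mem_alternatingGroup_of_isSwap hswap₁₂ hswap₃₄)
  match l, heven with
  | [], _ =>
    rw [List.prod_nil, eq_comm, hdisj.mul_eq_one_iff, swap_eq_one_iff] at hprod
    exact (h12 hprod.1).elim
  | [a, b], _ =>
    rw [List.prod_pair] at hprod
    have ha := hne a (by simp)
    rcases (hsw a (by simp)).eq_or_eq_of_mul_eq_mul (hsw b (by simp)) hswap₁₂ hswap₃₄ hdisj
      hprod with h | h
    exacts [absurd h ha.1, absurd h ha.2]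
  | [_], h | [_, _, _], h => simp [Nat.even_iff] at h
  | _ :: _ :: _ :: _ :: _, _ => simp

/-- The permutation `(1 2)(3 4)` cannot be written as the product of a list of
fewer than 4 pairwise distinct transpositions none of which equals `(1 2)` or
`(3 4)`. -/
theorem four_le_undo_two_swaps {α : Type*} [Fintype α] [DecidableEq α]
    (x₁ x₂ x₃ x₄ : α)
    (h12 : x₁ ≠ x₂) (h13 : x₁ ≠ x₃) (h14 : x₁ ≠ x₄)
    (h23 : x₂ ≠ x₃) (h24 : x₂ ≠ x₄) (h34 : x₃ ≠ x₄)
    (l : List (Equiv.Perm α))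
    (hsw : ∀ τ ∈ l, τ.IsSwap) (hnd : l.Nodup)
    (hne : ∀ τ ∈ l, τ ≠ Equiv.swap x₁ x₂ ∧ τ ≠ Equiv.swap x₃ x₄)
    (hprod : l.prod = Equiv.swap x₁ x₂ * Equiv.swap x₃ x₄) :
    4 ≤ l.length :=
  four_le_undo_two_swaps_general x₁ x₂ x₃ x₄ h12 h13 h14 h23 h24 h34 l hsw hne hprod
end

section
/- For every r ≥ 2, the permutation P = (1 2)(3 4)···(2r−1, 2r) of {1, ..., 2r} (the product of r disjoint transpositions) can be written as the product of a list of 2r + ε_r pairwise distinct transpositions, none of which equals any of the factors (2i−1, 2i) of P, where ε_r = 0 if r is even and ε_r = 1 if r is odd. -/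
/-!
The identity `(a c)(b d)(a d)(b c) = (a b)(c d)` for distinct `a b c d` replaces two consecutive
factors `(2m+1, 2m+2)(2m+3, 2m+4)` of `P` by four transpositions different from them and moving
only points of `{2m+1, …, 2m+4}`, so blocks on disjoint sets of points never repeat a
transposition. For even `r` the factors of `P` are handled in pairs; for odd `r` one starts from a
factorization of `(1 2)(3 4)(5 6)` into seven transpositions and appends blocks.
-/

open Equiv Equiv.Perm

theorem Equiv.Perm.list_prod_apply_eq_self {α : Type*} {l : List (Perm α)} {x : α}
    (h : ∀ σ ∈ l, σ x = x) : l.prod x = x :=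
  list_prod_mem (S := MulAction.stabilizer (Perm α) x) h

theorem Equiv.Perm.ne_of_apply_ne_self {α : Type*} {σ τ : Perm α} {x : α} (hσ : σ x ≠ x)
    (hτ : τ x = x) : σ ≠ τ := by
  rintro rfl
  exact hσ hτ

theorem Equiv.swap_ne_swap_of_notMem {α : Type*} [DecidableEq α] {a b c d : α} (hcd : c ≠ d)
    (hca : c ≠ a) (hcb : c ≠ b) : swap a b ≠ swap c d :=
  (ne_of_apply_ne_self (by simpa using hcd.symm) (swap_apply_of_ne_of_ne hca hcb)).symm

section Block

variable {α : Type*} [DecidableEq α] {a b c d : α}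

def blockSwaps (a b c d : α) : List (Perm α) := [swap a c, swap b d, swap a d, swap b c]

theorem prod_blockSwaps (h : [a, b, c, d].Nodup) :
    (blockSwaps a b c d).prod = swap a b * swap c d := by
  simp only [List.nodup_cons, List.mem_cons, List.not_mem_nil, not_or] at h
  ext x
  simp only [blockSwaps, List.prod_cons, List.prod_nil, mul_one, Perm.mul_apply, swap_apply_def]
  split_ifs <;> grind

theorem nodup_blockSwaps (h : [a, b, c, d].Nodup) : (blockSwaps a b c d).Nodup := by
  simp only [List.nodup_cons, List.mem_cons, List.not_mem_nil, not_or] at h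
  simp [blockSwaps, swap_ne_swap_of_notMem, (swap_injective_of_left _).eq_iff, *, Ne.symm]

theorem moves_of_mem_blockSwaps (h : [a, b, c, d].Nodup) {σ : Perm α}
    (hσ : σ ∈ blockSwaps a b c d) : (σ a ≠ a ∨ σ b ≠ b) ∧ (σ c ≠ c ∨ σ d ≠ d) := by
  simp only [List.nodup_cons, List.mem_cons, List.not_mem_nil, not_or] at h
  simp only [blockSwaps, List.mem_cons, List.not_mem_nil, or_false] at hσ
  rcases hσ with rfl | rfl | rfl | rfl <;> simp [swap_apply_def, *, Ne.symm, eq_comm]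

theorem isSwap_of_mem_blockSwaps (h : [a, b, c, d].Nodup) {σ : Perm α}
    (hσ : σ ∈ blockSwaps a b c d) : σ.IsSwap := by
  simp only [List.nodup_cons, List.mem_cons, List.not_mem_nil, not_or] at h
  simp only [blockSwaps, List.mem_cons, List.not_mem_nil, or_false] at hσ
  rcases hσ with rfl | rfl | rfl | rfl <;> exact ⟨_, _, by tauto, rfl⟩

theorem apply_eq_self_of_mem_blockSwaps {σ : Perm α} (hσ : σ ∈ blockSwaps a b c d) {x : α}
    (hx : x ∉ [a, b, c, d]) : σ x = x := by
  simp only [List.mem_cons, List.not_mem_nil, or_false, not_or] at hx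
  simp only [blockSwaps, List.mem_cons, List.not_mem_nil, or_false] at hσ
  rcases hσ with rfl | rfl | rfl | rfl <;> exact swap_apply_of_ne_of_ne (by tauto) (by tauto)

end Block

def pairSwap (i : ℕ) : Perm ℕ := swap (2 * i + 1) (2 * i + 2)

theorem pairSwap_apply_of_ne {i x : ℕ} (h₁ : x ≠ 2 * i + 1) (h₂ : x ≠ 2 * i + 2) :
    pairSwap i x = x :=
  swap_apply_of_ne_of_ne h₁ h₂

theorem pairSwap_apply_ne (i : ℕ) : pairSwap i (2 * i + 1) ≠ 2 * i + 1 := by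
  simp [pairSwap]

-- The support bound `apply_of_gt` is the invariant that keeps later blocks distinct from earlier
-- ones.
structure IsAvoidingFactorization (r : ℕ) (l : List (Perm ℕ)) : Prop where
  isSwap : ∀ τ ∈ l, τ.IsSwap
  apply_of_gt : ∀ τ ∈ l, ∀ x, 2 * r < x → τ x = x
  nodup : l.Nodup
  ne_pairSwap : ∀ τ ∈ l, ∀ i < r, τ ≠ pairSwap i
  prod_eq : l.prod = ((List.range r).map pairSwap).prod

theorem isAvoidingFactorization_zero : IsAvoidingFactorization 0 [] where
  isSwap := by simp
  apply_of_gt := by simp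
  nodup := List.nodup_nil
  ne_pairSwap := by simp
  prod_eq := rfl

def pairBlockSwaps (m : ℕ) : List (Perm ℕ) :=
  blockSwaps (2 * m + 1) (2 * m + 2) (2 * m + 3) (2 * m + 4)

theorem IsAvoidingFactorization.append_pairBlockSwaps {m : ℕ} {l : List (Perm ℕ)}
    (hl : IsAvoidingFactorization m l) :
    IsAvoidingFactorization (m + 2) (l ++ pairBlockSwaps m) := by
  have hd : [2 * m + 1, 2 * m + 2, 2 * m + 3, 2 * m + 4].Nodup := by simp
  have hmoves := fun σ (hσ : σ ∈ pairBlockSwaps m) => moves_of_mem_blockSwaps hd hσ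
  refine ⟨?_, ?_, ?_, ?_, ?_⟩
  · simp only [List.mem_append]
    rintro τ (hτ | hτ)
    exacts [hl.isSwap τ hτ, isSwap_of_mem_blockSwaps hd hτ]
  · simp only [List.mem_append]
    rintro τ (hτ | hτ) x hx
    · exact hl.apply_of_gt τ hτ x (by omega)
    · exact apply_eq_self_of_mem_blockSwaps hτ (by simp; omega)
  · refine List.nodup_append.2 ⟨hl.nodup, nodup_blockSwaps hd, fun τ hτ σ hσ => ?_⟩
    rcases (hmoves σ hσ).2 with h | h <;>
      exact (ne_of_apply_ne_self h (hl.apply_of_gt τ hτ _ (by omega))).symm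
  · simp only [List.mem_append]
    rintro τ (hτ | hτ) i hi
    · by_cases him : i < m
      · exact hl.ne_pairSwap τ hτ i him
      · exact (ne_of_apply_ne_self (pairSwap_apply_ne i) (hl.apply_of_gt τ hτ _ (by omega))).symm
    · by_cases him : i = m
      · rcases (hmoves τ hτ).2 with h | h <;>
          exact ne_of_apply_ne_self h (pairSwap_apply_of_ne (by omega) (by omega))
      · rcases (hmoves τ hτ).1 with h | h <;>
          exact ne_of_apply_ne_self h (pairSwap_apply_of_ne (by omega) (by omega))
  · rw [List.prod_append, hl.prod_eq, pairBlockSwaps, prod_blockSwaps hd, List.range_succ,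
      List.range_succ]
    simp [pairSwap, mul_add, add_assoc]

theorem IsAvoidingFactorization.exists_add_two_mul {m : ℕ} {l : List (Perm ℕ)}
    (hl : IsAvoidingFactorization m l) (k : ℕ) :
    ∃ l', IsAvoidingFactorization (m + 2 * k) l' ∧ l'.length = l.length + 4 * k := by
  induction k with
  | zero => exact ⟨l, hl, rfl⟩
  | succ k ih =>
    obtain ⟨l', hl', hlen⟩ := ih
    refine ⟨l' ++ pairBlockSwaps (m + 2 * k), hl'.append_pairBlockSwaps, ?_⟩
    simp [pairBlockSwaps, blockSwaps, hlen]
    ring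

theorem Equiv.Perm.ext_of_apply_eq_self_of_lt {σ τ : Perm ℕ} {n : ℕ}
    (hσ : ∀ x, n < x → σ x = x) (hτ : ∀ x, n < x → τ x = x)
    (h : (List.range (n + 1)).map σ = (List.range (n + 1)).map τ) : σ = τ := by
  ext x
  rcases le_or_gt x n with hx | hx
  · exact List.map_inj_left.1 h x (List.mem_range.2 (by omega))
  · rw [hσ x hx, hτ x hx]

def sevenSwaps : List (Perm ℕ) :=
  [(1, 3), (2, 5), (2, 4), (1, 4), (1, 6), (1, 5), (2, 3)].map (Function.uncurry swap)

theorem sevenSwaps_apply_of_gt : ∀ τ ∈ sevenSwaps, ∀ x, 6 < x → τ x = x := by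
  simp only [sevenSwaps, List.forall_mem_map]
  intro p hp x hx
  have : p.1 ≤ 6 ∧ p.2 ≤ 6 := by revert p; decide
  exact swap_apply_of_ne_of_ne (by omega) (by omega)

-- A permutation fixing every point above `6` is determined by its values on `0, …, 6`, which makes
-- the remaining checks decidable.
theorem isAvoidingFactorization_three : IsAvoidingFactorization 3 sevenSwaps where
  isSwap := by
    simp only [sevenSwaps, List.forall_mem_map]
    exact fun p hp => ⟨p.1, p.2, by revert p; decide, rfl⟩
  apply_of_gt := sevenSwaps_apply_of_gt
  nodup := .of_map (fun σ : Perm ℕ => (List.range 7).map σ) (by decide)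
  ne_pairSwap τ hτ i hi h := by
    have hwindow : ∀ τ ∈ sevenSwaps, ∀ i < 3,
        (List.range 7).map τ ≠ (List.range 7).map (pairSwap i) := by
      decide
    exact hwindow τ hτ i hi (h ▸ rfl)
  prod_eq := by
    refine ext_of_apply_eq_self_of_lt (n := 6) (fun x hx => ?_) (fun x hx => ?_) (by decide)
    · exact list_prod_apply_eq_self fun τ hτ => sevenSwaps_apply_of_gt τ hτ x hx
    · refine list_prod_apply_eq_self fun τ hτ => ?_
      obtain ⟨i, hi, rfl⟩ := List.mem_map.1 hτ
      exact pairSwap_apply_of_ne (by simp at hi; omega) (by simp at hi; omega)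

/-- For every `r ≥ 2`, the permutation `(1 2)(3 4)⋯(2r-1, 2r)` of `{1, ..., 2r}`
can be written as the product of a list of `2r + ε_r` pairwise distinct
transpositions, none equal to any of the factors `(2i-1, 2i)`, where `ε_r = 0`
if `r` is even and `ε_r = 1` if `r` is odd. -/
theorem exists_undo_r_disjoint_swaps (r : ℕ) (hr : 2 ≤ r) :
    ∃ l : List (Equiv.Perm ℕ),
      (∀ τ ∈ l, τ.IsSwap) ∧ l.Nodup ∧
      (∀ τ ∈ l, ∀ i < r, τ ≠ Equiv.swap (2 * i + 1) (2 * i + 2)) ∧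
      l.prod = ((List.range r).map fun i => Equiv.swap (2 * i + 1) (2 * i + 2)).prod ∧
      l.length = 2 * r + (if Even r then 0 else 1) := by
  obtain ⟨l, hl, hlen⟩ : ∃ l, IsAvoidingFactorization r l ∧
      l.length = 2 * r + if Even r then 0 else 1 := by
    rcases Nat.even_or_odd' r with ⟨k, rfl | rfl⟩
    · obtain ⟨l, hl, hlen⟩ := isAvoidingFactorization_zero.exists_add_two_mul k
      rw [zero_add] at hl
      exact ⟨l, hl, by simp [hlen]; ring⟩
    · obtain ⟨l, hl, hlen⟩ := isAvoidingFactorization_three.exists_add_two_mul (k - 1)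
      rw [show 3 + 2 * (k - 1) = 2 * k + 1 by omega] at hl
      refine ⟨l, hl, ?_⟩
      simp [hlen, sevenSwaps, Nat.not_even_bit1]
      omega
  exact ⟨l, hl.isSwap, hl.nodup, hl.ne_pairSwap, hl.prod_eq, hlen⟩
end
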